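/- In the low temperature regime with parameters k and c (k, c > 0), for every a with 0 < a < 2k − 1 there exist a constant C₄ > 0 and L₀ such that for all L ≥ L₀, P(T = S < ∞) ≤ C₄ L^{−(4k−2)+2a}; that is, with high probability the first atypical uniform number occurs at a single site only. -/

import Mathlib

/-!
Every uniform number is atypical with the same probability `p ≤ 2 ε_L`, independently. Splitting
the event according to the value `n` of `S` and a pair of sites atypical at time `n`, its
probability is at most `∑ₙ (1 - p)^{N (n-1)} N² p² = N² p² / (1 - (1 - p)^N)` with `N = L²`.
As `(1 - p)^N (1 + p)^N ≤ 1`, Bernoulli's inequality gives `1 - (1 - p)^N ≥ N p / (1 + N p)`, so the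
bound is at most `N p (1 + N p)`, and `ε_L ≤ e^{2|c|} L^{-4k}` makes this `O(L^{-(4k-2)})`.
-/

open Real Filter MeasureTheory ProbabilityTheory

noncomputable section

/-- A site of the 2d discrete torus `(ℤ/Lℤ)²`. -/
abbrev Site (L : ℕ) := ZMod L × ZMod L

/-- `ε_L = e^{−2J+q}/(2 cosh(2J−q))` with `J = k log L`, `q = c (log L)/L`. -/
def epsL (L : ℕ) (k c : ℝ) : ℝ :=
  Real.exp (-(2 * (k * Real.log L)) + c * Real.log L / L) /
    (2 * Real.cosh (2 * (k * Real.log L) - c * Real.log L / L))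

/-- The uniform number `U_x(n)` is *typical* if it lies in `(ε_L, 1 − ε_L)`. -/
def typical (L : ℕ) (k c : ℝ) (u : ℝ) : Prop :=
  u ∈ Set.Ioo (epsL L k c) (1 - epsL L k c)

open scoped ENNReal

lemma mul_le_one_add_mul_mul_one_sub_one_sub_pow {t : ℝ} (ht0 : 0 ≤ t) (ht1 : t ≤ 1) (n : ℕ) :
    n * t ≤ (1 + n * t) * (1 - (1 - t) ^ n) := by
  have hprod : (1 - t) ^ n * (1 + t) ^ n ≤ 1 := by
    rw [← mul_pow]
    exact pow_le_one₀ (by nlinarith) (by nlinarith)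
  have hbernoulli : 1 + n * t ≤ (1 + t) ^ n := one_add_mul_le_pow (by linarith) n
  nlinarith [mul_le_mul_of_nonneg_left hbernoulli (pow_nonneg (sub_nonneg.2 ht1) n)]

lemma ENNReal.natCast_sq_mul_sq_mul_inv_one_sub_one_sub_pow_le {p : ℝ≥0∞} (hp : p ≤ 1) (n : ℕ) :
    (n : ℝ≥0∞) ^ 2 * p ^ 2 * (1 - (1 - p) ^ n)⁻¹ ≤
      ENNReal.ofReal (n * p.toReal * (1 + n * p.toReal)) := by
  set t := p.toReal
  have ht0 : 0 ≤ t := ENNReal.toReal_nonneg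
  have ht1 : t ≤ 1 := ENNReal.toReal_le_of_le_ofReal zero_le_one (by simpa using hp)
  have hpt : p = ENNReal.ofReal t := (ENNReal.ofReal_toReal (ne_top_of_le_ne_top one_ne_top hp)).symm
  have hnum : (n : ℝ≥0∞) ^ 2 * p ^ 2 = ENNReal.ofReal ((n * t) ^ 2) := by
    rw [hpt, ← ENNReal.ofReal_natCast, ← ENNReal.ofReal_pow (by positivity),
      ← ENNReal.ofReal_pow ht0, ← ENNReal.ofReal_mul (by positivity), mul_pow]
  have hden : 1 - (1 - p) ^ n = ENNReal.ofReal (1 - (1 - t) ^ n) := by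
    rw [hpt, ← ENNReal.ofReal_one, ← ENNReal.ofReal_sub _ ht0, ← ENNReal.ofReal_pow (by linarith),
      ← ENNReal.ofReal_sub _ (by positivity)]
  have hkey := mul_le_one_add_mul_mul_one_sub_one_sub_pow ht0 ht1 n
  rcases (show 0 ≤ (n : ℝ) * t by positivity).eq_or_lt with h0 | hpos
  · simp [hnum, ← h0]
  have hq : 0 < 1 - (1 - t) ^ n := by nlinarith
  rw [hnum, hden, ← ENNReal.ofReal_inv_of_pos hq, ← ENNReal.ofReal_mul (by positivity)]
  refine ENNReal.ofReal_le_ofReal ?_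
  rw [← div_eq_mul_inv, div_le_iff₀ hq]
  nlinarith

lemma volume_restrict_Ioo_compl_Ioo_le (ε : ℝ) :
    volume.restrict (Set.Ioo (0 : ℝ) 1) (Set.Ioo ε (1 - ε))ᶜ ≤ 2 * ENNReal.ofReal ε := by
  rw [Measure.restrict_apply measurableSet_Ioo.compl]
  have hsub : (Set.Ioo ε (1 - ε))ᶜ ∩ Set.Ioo 0 1 ⊆ Set.Icc 0 ε ∪ Set.Icc (1 - ε) 1 := by
    rintro u ⟨hu, hu0, hu1⟩
    simp only [Set.mem_compl_iff, Set.mem_Ioo, not_and_or, not_lt] at hu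
    rcases hu with hu | hu
    · exact Or.inl ⟨hu0.le, hu⟩
    · exact Or.inr ⟨hu, hu1.le⟩
  calc _ ≤ volume (Set.Icc 0 ε ∪ Set.Icc (1 - ε) 1) := measure_mono hsub
    _ ≤ volume (Set.Icc 0 ε) + volume (Set.Icc (1 - ε) (1 : ℝ)) := measure_union_le _ _
    _ = 2 * ENNReal.ofReal ε := by simp [two_mul]

lemma epsL_nonneg (L : ℕ) (k c : ℝ) : 0 ≤ epsL L k c := by
  unfold epsL; positivity

lemma epsL_le {L : ℕ} (hL : 1 ≤ L) (k c : ℝ) :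
    epsL L k c ≤ exp (2 * |c|) * (L : ℝ) ^ (-(4 * k)) := by
  have hL0 : (0 : ℝ) < L := by exact_mod_cast hL
  have hlog : 0 ≤ log L := log_nonneg (by exact_mod_cast hL)
  set A := 2 * (k * log L) - c * log L / L
  have hcosh : exp A ≤ 2 * cosh A := by
    rw [cosh_eq]; linarith [exp_pos (-A)]
  have hε : epsL L k c ≤ exp (-(2 * A)) := by
    calc epsL L k c = exp (-A) / (2 * cosh A) := by
          unfold epsL; congr 2; ring
      _ ≤ exp (-A) / exp A := div_le_div_of_nonneg_left (exp_pos _).le (exp_pos _) hcosh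
      _ = exp (-(2 * A)) := by rw [← exp_sub]; ring_nf
  have hdrift : c * log L / L ≤ |c| := by
    have : log L / L ≤ 1 := (div_le_one hL0).2 (log_le_self hL0.le)
    calc c * log L / L ≤ |c| * (log L / L) := by
          rw [mul_div_assoc]; exact mul_le_mul_of_nonneg_right (le_abs_self c) (by positivity)
      _ ≤ |c| := mul_le_of_le_one_right (abs_nonneg c) this
  calc epsL L k c ≤ exp (-(2 * A)) := hε
    _ ≤ exp (2 * |c| + log L * (-(4 * k))) := exp_le_exp.2 (by linarith)
    _ = exp (2 * |c|) * (L : ℝ) ^ (-(4 * k)) := by rw [exp_add, rpow_def_of_pos hL0]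
open scoped ENNReal
open Finset

section FirstAtypicalTime

variable {Ω ι β : Type*} [MeasurableSpace Ω] [MeasurableSpace β] {μ : Measure Ω}
  [IsProbabilityMeasure μ] [Fintype ι] [DecidableEq ι] {U : ι × ℕ → Ω → β} {s : Set β} {p : ℝ≥0∞}

lemma measure_typical_before_atypical_pair (hU : ∀ i, Measurable (U i)) (hind : iIndepFun U μ)
    (hs : MeasurableSet s) (hp : ∀ i, μ (U i ⁻¹' sᶜ) = p) {x y : ι} (hxy : x ≠ y) (j : ℕ) :
    μ (⋂ i ∈ (univ ×ˢ Ico 1 (j + 1)) ∪ {(x, j + 1), (y, j + 1)},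
        U i ⁻¹' if i.2 = j + 1 then sᶜ else s) = (1 - p) ^ (Fintype.card ι * j) * p ^ 2 := by
  have hdisj : Disjoint (univ ×ˢ Ico 1 (j + 1)) {(x, j + 1), (y, j + 1)} := by
    rw [disjoint_left]
    rintro ⟨z, m⟩ hz hz'
    simp only [mem_product, mem_Ico] at hz
    simp only [mem_insert, mem_singleton, Prod.mk.injEq] at hz'
    omega
  have htypical : ∀ i ∈ univ ×ˢ Ico 1 (j + 1),
      μ (U i ⁻¹' if i.2 = j + 1 then sᶜ else s) = 1 - p := by
    intro i hi
    simp only [mem_product, mem_Ico] at hi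
    rw [if_neg (by omega), ← hp i, ← prob_compl_eq_one_sub ((hU i) hs.compl),
      Set.preimage_compl, compl_compl]
  rw [hind.measure_inter_preimage_eq_mul _ fun i _ ↦ by split_ifs <;> [exact hs.compl; exact hs],
    prod_union hdisj, prod_congr rfl htypical, prod_pair (by simp [hxy])]
  simp only [if_pos, hp, prod_const, card_product, card_univ, Nat.card_Ico, add_tsub_cancel_right]
  ring

lemma measure_first_atypical_time_at_two_sites_le (hU : ∀ i, Measurable (U i))
    (hind : iIndepFun U μ) (hs : MeasurableSet s) (hp : ∀ i, μ (U i ⁻¹' sᶜ) = p) :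
    μ {ω | ∃ n : ℕ, 1 ≤ n ∧ (∀ m : ℕ, 1 ≤ m → m < n → ∀ x : ι, U (x, m) ω ∈ s) ∧
        ∃ x y : ι, x ≠ y ∧ U (x, n) ω ∉ s ∧ U (y, n) ω ∉ s}
      ≤ (Fintype.card ι : ℝ≥0∞) ^ 2 * p ^ 2 * (1 - (1 - p) ^ Fintype.card ι)⁻¹ := by
  set N := Fintype.card ι
  let cylinder : ℕ → ι × ι → Set Ω := fun j z ↦
    ⋂ i ∈ (univ ×ˢ Ico 1 (j + 1)) ∪ {(z.1, j + 1), (z.2, j + 1)},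
      U i ⁻¹' if i.2 = j + 1 then sᶜ else s
  have hsub : {ω | ∃ n : ℕ, 1 ≤ n ∧ (∀ m : ℕ, 1 ≤ m → m < n → ∀ x : ι, U (x, m) ω ∈ s) ∧
      ∃ x y : ι, x ≠ y ∧ U (x, n) ω ∉ s ∧ U (y, n) ω ∉ s} ⊆
      ⋃ j, ⋃ z ∈ (univ : Finset ι).offDiag, cylinder j z := by
    rintro ω ⟨n, hn, hbefore, x, y, hxy, hx, hy⟩
    obtain ⟨j, rfl⟩ : ∃ j, n = j + 1 := ⟨n - 1, by omega⟩
    refine Set.mem_iUnion.2 ⟨j, Set.mem_iUnion₂.2 ⟨(x, y), by simp [hxy], Set.mem_iInter₂.2 ?_⟩⟩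
    rintro ⟨z, m⟩ hi
    rcases mem_union.1 hi with hi | hi
    · simp only [mem_product, mem_Ico] at hi
      rw [if_neg (by omega)]
      exact hbefore m hi.2.1 hi.2.2 z
    · simp only [mem_insert, mem_singleton, Prod.mk.injEq] at hi
      rcases hi with ⟨rfl, rfl⟩ | ⟨rfl, rfl⟩ <;> simpa
  have hcylinder : ∀ j, ∑ z ∈ (univ : Finset ι).offDiag, μ (cylinder j z) ≤
      N ^ 2 * p ^ 2 * ((1 - p) ^ N) ^ j := by
    intro j
    rw [sum_congr rfl fun z hz ↦
      measure_typical_before_atypical_pair hU hind hs hp (mem_offDiag.1 hz).2.2 j, sum_const,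
      nsmul_eq_mul, ← pow_mul, mul_comm _ (p ^ 2), ← mul_assoc]
    gcongr
    exact_mod_cast (offDiag_card univ).trans_le (Nat.sub_le _ _) |>.trans (by simp [N, sq])
  calc μ _ ≤ ∑' j, ∑ z ∈ (univ : Finset ι).offDiag, μ (cylinder j z) :=
        (measure_mono hsub).trans <| (measure_iUnion_le _).trans <|
          ENNReal.tsum_le_tsum fun j ↦ measure_biUnion_finset_le _ _
    _ ≤ ∑' j, N ^ 2 * p ^ 2 * ((1 - p) ^ N) ^ j := ENNReal.tsum_le_tsum hcylinder
    _ = N ^ 2 * p ^ 2 * (1 - (1 - p) ^ N)⁻¹ := by rw [ENNReal.tsum_mul_left, ENNReal.tsum_geometric]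

end FirstAtypicalTime

lemma sq_mul_one_add_sq_mul_le_of_le_two_epsL {L : ℕ} (hL : 1 ≤ L) {k c a t : ℝ}
    (hk : 1 < 2 * k) (ha : 0 ≤ a) (ht0 : 0 ≤ t) (ht : t ≤ 2 * epsL L k c) :
    (L : ℝ) ^ 2 * t * (1 + (L : ℝ) ^ 2 * t) ≤
      2 * exp (2 * |c|) * (1 + 2 * exp (2 * |c|)) * (L : ℝ) ^ (-(4 * k - 2) + 2 * a) := by
  set K := 2 * exp (2 * |c|)
  have hL1 : (1 : ℝ) ≤ L := by exact_mod_cast hL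
  have hdecay : (L : ℝ) ^ (-(4 * k - 2)) ≤ 1 := rpow_le_one_of_one_le_of_nonpos hL1 (by linarith)
  have hx : (L : ℝ) ^ 2 * t ≤ K * (L : ℝ) ^ (-(4 * k - 2)) := by
    have hsplit : (L : ℝ) ^ (-(4 * k - 2)) = L ^ 2 * L ^ (-(4 * k)) := by
      rw [← rpow_natCast, ← rpow_add (by positivity)]; ring_nf
    calc (L : ℝ) ^ 2 * t ≤ (L : ℝ) ^ 2 * (2 * (exp (2 * |c|) * L ^ (-(4 * k)))) := by
          gcongr; linarith [epsL_le hL k c]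
      _ = K * (L : ℝ) ^ (-(4 * k - 2)) := by rw [hsplit]; ring
  have hgrow : (L : ℝ) ^ (-(4 * k - 2)) ≤ L ^ (-(4 * k - 2) + 2 * a) :=
    rpow_le_rpow_of_exponent_le hL1 (by linarith)
  calc (L : ℝ) ^ 2 * t * (1 + (L : ℝ) ^ 2 * t) ≤ K * (L : ℝ) ^ (-(4 * k - 2)) * (1 + K) := by
        gcongr; linarith [mul_le_of_le_one_right (by positivity : 0 ≤ K) hdecay]
    _ ≤ K * (1 + K) * L ^ (-(4 * k - 2) + 2 * a) := by rw [mul_right_comm]; gcongr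

theorem stmt17 (k c : ℝ) :
    ∀ a : ℝ, 0 < a → a < 2 * k - 1 → ∃ C₄ > (0:ℝ), ∃ L₀ : ℕ, ∀ L : ℕ, L₀ ≤ L → 2 ≤ L →
      ∀ (Ω : Type) (_ : MeasurableSpace Ω) (μ : Measure Ω)
        (_ : IsProbabilityMeasure μ) (U : Site L × ℕ → Ω → ℝ),
        (∀ i, Measurable (U i)) →
        iIndepFun U μ →
        (∀ i, μ.map (U i) = volume.restrict (Set.Ioo (0:ℝ) 1)) →
        μ {ω | ∃ n : ℕ, 1 ≤ n ∧
            (∀ m : ℕ, 1 ≤ m → m < n → ∀ x : Site L, typical L k c (U (x, m) ω)) ∧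
            ∃ x y : Site L, x ≠ y ∧
              ¬ typical L k c (U (x, n) ω) ∧ ¬ typical L k c (U (y, n) ω)}
          ≤ ENNReal.ofReal (C₄ * (L : ℝ) ^ (-(4 * k - 2) + 2 * a)) := by
  intro a ha0 ha1
  refine ⟨2 * exp (2 * |c|) * (1 + 2 * exp (2 * |c|)), by positivity, 0,
    fun L _ hL Ω _ μ _ U hU hind hmap ↦ ?_⟩
  have : NeZero L := ⟨by omega⟩
  set ε := epsL L k c
  set p := volume.restrict (Set.Ioo (0 : ℝ) 1) (Set.Ioo ε (1 - ε))ᶜ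
  have hp : ∀ i, μ (U i ⁻¹' (Set.Ioo ε (1 - ε))ᶜ) = p := fun i ↦ by
    rw [← Measure.map_apply (hU i) measurableSet_Ioo.compl, hmap]
  have hp1 : p ≤ 1 := hp (0, 0) ▸ prob_le_one
  have hpε : p.toReal ≤ 2 * ε := ENNReal.toReal_le_of_le_ofReal (by positivity [epsL_nonneg L k c])
    ((volume_restrict_Ioo_compl_Ioo_le ε).trans_eq (by rw [ENNReal.ofReal_mul zero_le_two]; simp))
  have hN : Fintype.card (Site L) = L ^ 2 := by simp [sq]
  calc _ ≤ ((L ^ 2 : ℕ) : ℝ≥0∞) ^ 2 * p ^ 2 * (1 - (1 - p) ^ (L ^ 2))⁻¹ :=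
        hN ▸ measure_first_atypical_time_at_two_sites_le hU hind measurableSet_Ioo hp
    _ ≤ ENNReal.ofReal ((L ^ 2 : ℕ) * p.toReal * (1 + (L ^ 2 : ℕ) * p.toReal)) :=
        ENNReal.natCast_sq_mul_sq_mul_inv_one_sub_one_sub_pow_le hp1 _
    _ ≤ _ := ENNReal.ofReal_le_ofReal <| by
        push_cast
        exact sq_mul_one_add_sq_mul_le_of_le_two_epsL (by omega) (by linarith) ha0.le
          ENNReal.toReal_nonneg hpε
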